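/- Let B ∈ ℝ^{m×n} be a NAE3SAT clause matrix determined by index functions i₁,i₂,i₃ : [m] → [n] and signs b₁,b₂,b₃ : [m] → {−1,1} (the j-th row of B is b₁(j)e^{(i₁(j))} + b₂(j)e^{(i₂(j))} + b₃(j)e^{(i₃(j))}). Suppose ψ ∈ {0,1}ⁿ NAE-satisfies B, i.e. ‖B((1/2)·1 − ψ)‖_∞ ≤ 1/2. If d ∈ ℝⁿ is any vector satisfying (1 − 2ψᵢ)·dᵢ ≥ 0 and |dᵢ| ≤ 2 for every i ∈ [n], then ‖Bd‖_∞ ≤ 4. -/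

import Mathlib

/-!
With `σ = 1 - 2ψ ∈ {±1}ⁿ` we have `(1/2)·1 - ψ = σ/2`, so NAE-satisfaction says that in every
clause the signs `bₖ σ_{iₖ}` are not all equal. Writing `dᵢ = σᵢ uᵢ` with `uᵢ = σᵢ dᵢ ∈ [0, 2]`,
row `j` of `Bd` is `∑ₖ (bₖ σ_{iₖ}) u_{iₖ}`: at most two of its three terms have the same sign,
and each has absolute value at most `2`.
-/

/-- `B` is a NAE3SAT clause matrix: each row is `b₁e^{i₁} + b₂e^{i₂} + b₃e^{i₃}`
with signs `b₁,b₂,b₃ ∈ {-1,1}`. -/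
def IsNAEClauseMatrix {m n : ℕ} (B : Matrix (Fin m) (Fin n) ℝ) : Prop :=
  ∃ (i1 i2 i3 : Fin m → Fin n) (b1 b2 b3 : Fin m → ℝ),
    (∀ j, (b1 j = -1 ∨ b1 j = 1) ∧ (b2 j = -1 ∨ b2 j = 1) ∧ (b3 j = -1 ∨ b3 j = 1)) ∧
    (∀ j i, B j i = (if i1 j = i then b1 j else 0) + (if i2 j = i then b2 j else 0) +
      (if i3 j = i then b3 j else 0))

/-- `ψ ∈ {0,1}ⁿ` NAE-satisfies `B` if `‖B((1/2)·1 - ψ)‖_∞ ≤ 1/2`. -/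
def NAESatisfies {m n : ℕ} (B : Matrix (Fin m) (Fin n) ℝ) (ψ : Fin n → ℝ) : Prop :=
  (∀ i, ψ i = 0 ∨ ψ i = 1) ∧ ‖B.mulVec ((fun _ => (1 : ℝ) / 2) - ψ)‖ ≤ 1 / 2

open Set

lemma abs_mixed_sign_sum_three_le {t₁ t₂ t₃ u₁ u₂ u₃ c : ℝ}
    (ht₁ : t₁ = -1 ∨ t₁ = 1) (ht₂ : t₂ = -1 ∨ t₂ = 1) (ht₃ : t₃ = -1 ∨ t₃ = 1)
    (ht : |t₁ + t₂ + t₃| ≤ 1)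
    (hu₁ : u₁ ∈ Icc 0 c) (hu₂ : u₂ ∈ Icc 0 c) (hu₃ : u₃ ∈ Icc 0 c) :
    |t₁ * u₁ + t₂ * u₂ + t₃ * u₃| ≤ 2 * c := by
  obtain ⟨ht_lo, ht_hi⟩ := abs_le.1 ht
  obtain ⟨_, _⟩ := hu₁
  obtain ⟨_, _⟩ := hu₂
  obtain ⟨_, _⟩ := hu₃
  rw [abs_le]
  rcases ht₁ with rfl | rfl <;> rcases ht₂ with rfl | rfl <;> rcases ht₃ with rfl | rfl <;>
    constructor <;> linarith

lemma mulVec_apply_of_row_eq_add_single {m n : ℕ} {B : Matrix (Fin m) (Fin n) ℝ} {j : Fin m}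
    {i₁ i₂ i₃ : Fin n} {b₁ b₂ b₃ : ℝ}
    (hB : ∀ i, B j i = (if i₁ = i then b₁ else 0) + (if i₂ = i then b₂ else 0) +
      (if i₃ = i then b₃ else 0)) (v : Fin n → ℝ) :
    B.mulVec v j = b₁ * v i₁ + b₂ * v i₂ + b₃ * v i₃ := by
  simp [Matrix.mulVec, dotProduct, hB, add_mul, Finset.sum_add_distrib, ite_mul]

lemma mul_sign_eq_neg_one_or_one {s t : ℝ} (hs : s = -1 ∨ s = 1) (ht : t = -1 ∨ t = 1) :
    s * t = -1 ∨ s * t = 1 := by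
  rcases hs with rfl | rfl <;> rcases ht with rfl | rfl <;> norm_num

lemma mul_mem_Icc_of_sign {σ d c : ℝ} (hσ : σ = -1 ∨ σ = 1) (hσd : 0 ≤ σ * d) (hd : |d| ≤ c) :
    σ * d ∈ Icc 0 c := by
  refine ⟨hσd, ?_⟩
  rcases hσ with rfl | rfl <;> cases abs_le.1 hd <;> linarith

lemma one_sub_two_mul_eq_neg_one_or_one {x : ℝ} (hx : x = 0 ∨ x = 1) :
    1 - 2 * x = -1 ∨ 1 - 2 * x = 1 := by
  rcases hx with rfl | rfl <;> norm_num

lemma NAESatisfies.abs_sign_sum_le_one {m n : ℕ} {B : Matrix (Fin m) (Fin n) ℝ} {ψ : Fin n → ℝ}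
    (hψ : NAESatisfies B ψ) {j : Fin m} {i₁ i₂ i₃ : Fin n} {b₁ b₂ b₃ : ℝ}
    (hB : ∀ i, B j i = (if i₁ = i then b₁ else 0) + (if i₂ = i then b₂ else 0) +
      (if i₃ = i then b₃ else 0)) :
    |b₁ * (1 - 2 * ψ i₁) + b₂ * (1 - 2 * ψ i₂) + b₃ * (1 - 2 * ψ i₃)| ≤ 1 := by
  have hhalf := (norm_le_pi_norm _ j).trans hψ.2
  rw [Real.norm_eq_abs, mulVec_apply_of_row_eq_add_single hB] at hhalf
  simp only [Pi.sub_apply] at hhalf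
  calc _ = 2 * |b₁ * (1 / 2 - ψ i₁) + b₂ * (1 / 2 - ψ i₂) + b₃ * (1 / 2 - ψ i₃)| := by
        rw [← abs_two, ← abs_mul]; ring_nf
    _ ≤ 1 := by linarith

theorem clause_matrix_bound {m n : ℕ} (B : Matrix (Fin m) (Fin n) ℝ)
    (hB : IsNAEClauseMatrix B) (ψ : Fin n → ℝ) (hψ : NAESatisfies B ψ)
    (d : Fin n → ℝ) (hd : ∀ i, 0 ≤ (1 - 2 * ψ i) * d i ∧ |d i| ≤ 2) :
    ‖B.mulVec d‖ ≤ 4 := by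
  obtain ⟨i₁, i₂, i₃, b₁, b₂, b₃, hb, hrow⟩ := hB
  have hσ (i : Fin n) := one_sub_two_mul_eq_neg_one_or_one (hψ.1 i)
  have hu (i : Fin n) := mul_mem_Icc_of_sign (hσ i) (hd i).1 (hd i).2
  have hdσ (i : Fin n) (b : ℝ) : b * d i = b * (1 - 2 * ψ i) * ((1 - 2 * ψ i) * d i) := by
    rcases hσ i with h | h <;> rw [h] <;> ring
  refine (pi_norm_le_iff_of_nonneg (by norm_num)).2 fun j => ?_
  obtain ⟨hb₁, hb₂, hb₃⟩ := hb j
  rw [Real.norm_eq_abs, mulVec_apply_of_row_eq_add_single (hrow j), hdσ (i₁ j) (b₁ j),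
    hdσ (i₂ j) (b₂ j), hdσ (i₃ j) (b₃ j), show (4 : ℝ) = 2 * 2 by norm_num]
  exact abs_mixed_sign_sum_three_le (mul_sign_eq_neg_one_or_one hb₁ (hσ _))
    (mul_sign_eq_neg_one_or_one hb₂ (hσ _)) (mul_sign_eq_neg_one_or_one hb₃ (hσ _))
    (hψ.abs_sign_sum_le_one (hrow j)) (hu _) (hu _) (hu _)
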